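/- Let T > 0, δ > 0, β > 0, M > 0, let α be a finite nonnegative measure on [0, δ], and let X : ℝ → ℝ be measurable and square-integrable against e^{-βt}dt on [0, T+δ]. Suppose |φ(t,s)| ≤ M for all t, s, and set X_{δ⁺}(t) = ∫_{[0,δ]} φ(t,t+s)X(t+s) dα(s). Then ∫_0^T e^{-βt}|X_{δ⁺}(t)|² dt ≤ M²·α([0,δ])·(∫_{[0,δ]} e^{βs} dα(s))·∫_0^{T+δ} e^{-βt}|X(t)|² dt. -/

import Mathlib

open MeasureTheory ENNReal

lemma my_lintegral_sq_le {μ : Measure ℝ} (f : ℝ → ℝ≥0∞) (hf : AEMeasurable f μ) :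
    (∫⁻ x, f x ∂μ) ^ 2 ≤ μ Set.univ * ∫⁻ x, f x ^ 2 ∂μ := by
  have hpq : (2:ℝ).HolderConjugate 2 := ⟨by norm_num, by norm_num, by norm_num⟩
  have h := ENNReal.lintegral_mul_le_Lp_mul_Lq μ hpq hf aemeasurable_const (g := fun _ => 1)
  simp only [Pi.mul_apply, mul_one, one_rpow, lintegral_const, one_mul] at h
  have h2 : (∫⁻ x, f x ∂μ) ^ 2 ≤
      ((∫⁻ x, f x ^ (2:ℝ) ∂μ) ^ (1/(2:ℝ)) * (μ Set.univ) ^ (1/(2:ℝ))) ^ 2 :=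
    pow_le_pow_left' h 2
  refine h2.trans_eq ?_
  rw [mul_pow, ← ENNReal.rpow_natCast (_ ^ (1/(2:ℝ))) 2,
    ← ENNReal.rpow_natCast ((μ Set.univ) ^ (1/(2:ℝ))) 2,
    ← ENNReal.rpow_mul, ← ENNReal.rpow_mul]
  norm_num
  rw [mul_comm]

theorem advanced_term_estimate (T δ β M : ℝ) (hT : T > 0) (hδ : δ > 0) (hβ : β > 0)
    (hM : M > 0) (α : Measure ℝ) [IsFiniteMeasure α]
    (φ : ℝ → ℝ → ℝ) (hφmeas : Measurable (Function.uncurry φ))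
    (hφ : ∀ t s, |φ t s| ≤ M)
    (X : ℝ → ℝ) (hX : Measurable X)
    (hint : IntegrableOn (fun t => Real.exp (-β * t) * |X t| ^ 2) (Set.Icc 0 (T + δ))) :
    (∫ t in (0:ℝ)..T,
        Real.exp (-β * t) * |∫ s in Set.Icc 0 δ, φ t (t + s) * X (t + s) ∂α| ^ 2) ≤
      M ^ 2 * (α (Set.Icc 0 δ)).toReal * (∫ s in Set.Icc 0 δ, Real.exp (β * s) ∂α) *
        ∫ t in (0:ℝ)..(T + δ), Real.exp (-β * t) * |X t| ^ 2 := by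
  set S : Set ℝ := Set.Icc 0 δ with hS
  set I : ℝ → ℝ := fun t => ∫ s in S, φ t (t + s) * X (t + s) ∂α with hI
  set g : ℝ → ℝ := fun t => Real.exp (-β * t) * |I t| ^ 2 with hg
  -- measurability facts
  have hXabs2 : Measurable fun s : ℝ => ENNReal.ofReal (|X s| ^ 2) :=
    ENNReal.measurable_ofReal.comp ((hX.abs).pow_const 2)
  have hfmeas : Measurable fun p : ℝ × ℝ => φ p.1 (p.1 + p.2) * X (p.1 + p.2) :=
    (hφmeas.comp (measurable_fst.prodMk (measurable_fst.add measurable_snd))).mul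
      (hX.comp (measurable_fst.add measurable_snd))
  have hImeas : StronglyMeasurable I :=
    hfmeas.stronglyMeasurable.integral_prod_right'
  have hgmeas : Measurable g :=
    ((Real.measurable_exp.comp (measurable_const.mul measurable_id))).mul
      ((hImeas.measurable.abs).pow_const 2)
  have hgnn : ∀ t, 0 ≤ g t := fun t =>
    mul_nonneg (Real.exp_pos _).le (pow_nonneg (abs_nonneg _) 2)
  -- rewrite interval integrals
  rw [intervalIntegral.integral_of_le hT.le,
    intervalIntegral.integral_of_le (by linarith : (0:ℝ) ≤ T + δ)]
  -- the X-integral over Ioc 0 (T+δ)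
  have hint' : IntegrableOn (fun t => Real.exp (-β * t) * |X t| ^ 2) (Set.Ioc 0 (T + δ)) :=
    hint.mono_set Set.Ioc_subset_Icc_self
  have hXnn : ∀ t, 0 ≤ Real.exp (-β * t) * |X t| ^ 2 := fun t =>
    mul_nonneg (Real.exp_pos _).le (pow_nonneg (abs_nonneg _) 2)
  set L : ℝ≥0∞ := ∫⁻ t in Set.Ioc 0 (T + δ), ENNReal.ofReal (Real.exp (-β * t) * |X t| ^ 2)
    with hL
  have hLval : L = ENNReal.ofReal (∫ t in Set.Ioc 0 (T + δ), Real.exp (-β * t) * |X t| ^ 2) := by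
    rw [hL, ← ofReal_integral_eq_lintegral_ofReal hint' (Filter.Eventually.of_forall hXnn)]
  -- the exp integral against α
  have hexpmeas : Measurable fun s : ℝ => ENNReal.ofReal (Real.exp (β * s)) :=
    ENNReal.measurable_ofReal.comp (Real.measurable_exp.comp (measurable_const.mul measurable_id))
  have hexpint : Integrable (fun s => Real.exp (β * s)) (α.restrict S) := by
    refine Integrable.mono' (integrable_const (Real.exp (β * δ)))
      ((Real.measurable_exp.comp (measurable_const.mul measurable_id)).aestronglyMeasurable) ?_
    filter_upwards [ae_restrict_mem measurableSet_Icc] with s hs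
    rw [Real.norm_eq_abs, abs_of_nonneg (Real.exp_pos _).le]
    exact Real.exp_le_exp.2 (mul_le_mul_of_nonneg_left hs.2 hβ.le)
  set E : ℝ≥0∞ := ∫⁻ s in S, ENNReal.ofReal (Real.exp (β * s)) ∂α with hE
  have hEval : E = ENNReal.ofReal (∫ s in S, Real.exp (β * s) ∂α) := by
    rw [hE, ← ofReal_integral_eq_lintegral_ofReal hexpint
      (Filter.Eventually.of_forall fun s => (Real.exp_pos _).le)]
  -- pointwise bound
  have hpt : ∀ t, ENNReal.ofReal (g t) ≤
      ENNReal.ofReal (M ^ 2) * α S *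
        ∫⁻ s in S, ENNReal.ofReal (Real.exp (-β * t) * |X (t + s)| ^ 2) ∂α := by
    intro t
    have hm1 : Measurable fun s : ℝ => ENNReal.ofReal (|X (t + s)| ^ 2) :=
      hXabs2.comp (measurable_const.add measurable_id)
    have h1 : (ENNReal.ofReal |I t|) ≤ ∫⁻ s in S, ENNReal.ofReal (M * |X (t + s)|) ∂α := by
      rw [← Real.enorm_eq_ofReal_abs]
      refine (enorm_integral_le_lintegral_enorm _).trans (lintegral_mono fun s => ?_)
      rw [Real.enorm_eq_ofReal_abs, abs_mul]
      exact ENNReal.ofReal_le_ofReal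
        (mul_le_mul_of_nonneg_right (hφ t (t + s)) (abs_nonneg _))
    have h2 : (ENNReal.ofReal |I t|) ^ 2 ≤
        α S * ∫⁻ s in S, ENNReal.ofReal (M * |X (t + s)|) ^ 2 ∂α := by
      refine (pow_le_pow_left' h1 2).trans ?_
      have := my_lintegral_sq_le (μ := α.restrict S)
        (fun s => ENNReal.ofReal (M * |X (t + s)|))
        ((ENNReal.measurable_ofReal.comp
          (measurable_const.mul
            ((hX.comp (measurable_const.add measurable_id)).abs))).aemeasurable)
      simpa [Measure.restrict_apply_univ] using this
    have A : ∫⁻ s in S, ENNReal.ofReal (M * |X (t + s)|) ^ 2 ∂α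
        = ENNReal.ofReal (M ^ 2) * ∫⁻ s in S, ENNReal.ofReal (|X (t + s)| ^ 2) ∂α := by
      rw [← lintegral_const_mul _ hm1]
      refine lintegral_congr fun s => ?_
      calc ENNReal.ofReal (M * |X (t + s)|) ^ 2
          = ENNReal.ofReal ((M * |X (t + s)|) ^ 2) :=
            (ENNReal.ofReal_pow (mul_nonneg hM.le (abs_nonneg _)) 2).symm
        _ = ENNReal.ofReal (M ^ 2 * |X (t + s)| ^ 2) := by rw [mul_pow]
        _ = ENNReal.ofReal (M ^ 2) * ENNReal.ofReal (|X (t + s)| ^ 2) :=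
            ENNReal.ofReal_mul (sq_nonneg M)
    have B : ∫⁻ s in S, ENNReal.ofReal (Real.exp (-β * t) * |X (t + s)| ^ 2) ∂α
        = ENNReal.ofReal (Real.exp (-β * t)) *
            ∫⁻ s in S, ENNReal.ofReal (|X (t + s)| ^ 2) ∂α := by
      rw [← lintegral_const_mul _ hm1]
      exact lintegral_congr fun s => ENNReal.ofReal_mul (Real.exp_pos _).le
    calc ENNReal.ofReal (g t)
        = ENNReal.ofReal (Real.exp (-β * t)) * (ENNReal.ofReal |I t|) ^ 2 := by
          rw [hg, ENNReal.ofReal_mul (Real.exp_pos _).le, ENNReal.ofReal_pow (abs_nonneg _)]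
      _ ≤ ENNReal.ofReal (Real.exp (-β * t)) *
            (α S * ∫⁻ s in S, ENNReal.ofReal (M * |X (t + s)|) ^ 2 ∂α) := by gcongr
      _ = ENNReal.ofReal (M ^ 2) * α S *
            ∫⁻ s in S, ENNReal.ofReal (Real.exp (-β * t) * |X (t + s)| ^ 2) ∂α := by
          rw [A, B]; ring
  -- product measurability for Fubini
  have hFmeas : Measurable fun p : ℝ × ℝ =>
      ENNReal.ofReal (Real.exp (-β * p.1) * |X (p.1 + p.2)| ^ 2) :=
    ENNReal.measurable_ofReal.comp
      ((Real.measurable_exp.comp (measurable_const.mul measurable_fst)).mul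
        (((hX.comp (measurable_fst.add measurable_snd)).abs).pow_const 2))
  -- inner bound for a.e. s
  have hinner : ∀ᵐ s ∂(α.restrict S),
      (∫⁻ t in Set.Ioc 0 T, ENNReal.ofReal (Real.exp (-β * t) * |X (t + s)| ^ 2))
        ≤ ENNReal.ofReal (Real.exp (β * s)) * L := by
    filter_upwards [ae_restrict_mem measurableSet_Icc] with s hs
    have hs0 : 0 ≤ s := hs.1
    have hsδ : s ≤ δ := hs.2
    have hGmeas : Measurable fun u : ℝ => ENNReal.ofReal (Real.exp (-β * u) * |X u| ^ 2) :=
      ENNReal.measurable_ofReal.comp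
        ((Real.measurable_exp.comp (measurable_const.mul measurable_id)).mul
          ((hX.abs).pow_const 2))
    have htrans : (∫⁻ t in Set.Ioc 0 T,
        ENNReal.ofReal (Real.exp (-β * (t + s)) * |X (t + s)| ^ 2))
        = ∫⁻ u in Set.Ioc s (T + s), ENNReal.ofReal (Real.exp (-β * u) * |X u| ^ 2) := by
      rw [← lintegral_indicator measurableSet_Ioc, ← lintegral_indicator measurableSet_Ioc]
      have hind : ∀ t : ℝ, (Set.Ioc 0 T).indicator
            (fun t => ENNReal.ofReal (Real.exp (-β * (t + s)) * |X (t + s)| ^ 2)) t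
          = (Set.Ioc s (T + s)).indicator
            (fun u => ENNReal.ofReal (Real.exp (-β * u) * |X u| ^ 2)) (t + s) := by
        intro t
        by_cases h : t ∈ Set.Ioc 0 T
        · have h' := Set.mem_Ioc.1 h
          rw [Set.indicator_of_mem h, Set.indicator_of_mem
            (Set.mem_Ioc.2 ⟨by linarith [h'.1], by linarith [h'.2]⟩)]
        · rw [Set.indicator_of_notMem h, Set.indicator_of_notMem (fun hc => by
            have hc' := Set.mem_Ioc.1 hc
            exact h (Set.mem_Ioc.2 ⟨by linarith [hc'.1], by linarith [hc'.2]⟩))]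
      simp_rw [hind]
      exact lintegral_add_right_eq_self
        ((Set.Ioc s (T + s)).indicator fun u => ENNReal.ofReal (Real.exp (-β * u) * |X u| ^ 2)) s
    calc (∫⁻ t in Set.Ioc 0 T, ENNReal.ofReal (Real.exp (-β * t) * |X (t + s)| ^ 2))
        = ∫⁻ t in Set.Ioc 0 T, ENNReal.ofReal (Real.exp (β * s)) *
            ENNReal.ofReal (Real.exp (-β * (t + s)) * |X (t + s)| ^ 2) := by
          refine lintegral_congr fun t => ?_
          have hexp : Real.exp (β * s) * Real.exp (-β * (t + s)) = Real.exp (-β * t) := by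
            rw [← Real.exp_add]; ring_nf
          rw [← ENNReal.ofReal_mul (Real.exp_pos _).le, ← mul_assoc, hexp]
      _ = ENNReal.ofReal (Real.exp (β * s)) *
            ∫⁻ t in Set.Ioc 0 T, ENNReal.ofReal (Real.exp (-β * (t + s)) * |X (t + s)| ^ 2) :=
          lintegral_const_mul _ (hGmeas.comp (measurable_id.add measurable_const))
      _ = ENNReal.ofReal (Real.exp (β * s)) *
            ∫⁻ u in Set.Ioc s (T + s), ENNReal.ofReal (Real.exp (-β * u) * |X u| ^ 2) := by
          rw [htrans]
      _ ≤ ENNReal.ofReal (Real.exp (β * s)) * L := by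
          gcongr
          exact lintegral_mono_set (Set.Ioc_subset_Ioc hs0 (by linarith))
  -- the main lintegral bound
  have hle : (∫⁻ t in Set.Ioc 0 T, ENNReal.ofReal (g t)) ≤
      ENNReal.ofReal (M ^ 2) * α S * (E * L) := by
    have hinnermeas : Measurable fun t =>
        ∫⁻ s in S, ENNReal.ofReal (Real.exp (-β * t) * |X (t + s)| ^ 2) ∂α :=
      hFmeas.lintegral_prod_right'
    calc (∫⁻ t in Set.Ioc 0 T, ENNReal.ofReal (g t))
        ≤ ∫⁻ t in Set.Ioc 0 T, ENNReal.ofReal (M ^ 2) * α S *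
            ∫⁻ s in S, ENNReal.ofReal (Real.exp (-β * t) * |X (t + s)| ^ 2) ∂α :=
          lintegral_mono hpt
      _ = ENNReal.ofReal (M ^ 2) * α S * ∫⁻ t in Set.Ioc 0 T,
            ∫⁻ s in S, ENNReal.ofReal (Real.exp (-β * t) * |X (t + s)| ^ 2) ∂α :=
          lintegral_const_mul _ hinnermeas
      _ = ENNReal.ofReal (M ^ 2) * α S * ∫⁻ s in S,
            (∫⁻ t in Set.Ioc 0 T, ENNReal.ofReal (Real.exp (-β * t) * |X (t + s)| ^ 2)) ∂α := by
          rw [lintegral_lintegral_swap hFmeas.aemeasurable]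
      _ ≤ ENNReal.ofReal (M ^ 2) * α S *
            ∫⁻ s in S, ENNReal.ofReal (Real.exp (β * s)) * L ∂α := by
          exact mul_le_mul_right (lintegral_mono_ae hinner) _
      _ = ENNReal.ofReal (M ^ 2) * α S * (E * L) := by
          rw [lintegral_mul_const _ hexpmeas]
  -- conclude
  rw [integral_eq_lintegral_of_nonneg_ae (Filter.Eventually.of_forall hgnn)
    hgmeas.aestronglyMeasurable]
  have hfin : ENNReal.ofReal (M ^ 2) * α S * (E * L) ≠ ⊤ := by
    rw [hEval, hLval]
    exact ENNReal.mul_ne_top (ENNReal.mul_ne_top ENNReal.ofReal_ne_top (measure_ne_top α S))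
      (ENNReal.mul_ne_top ENNReal.ofReal_ne_top ENNReal.ofReal_ne_top)
  refine (ENNReal.toReal_mono hfin hle).trans_eq ?_
  rw [hEval, hLval, ENNReal.toReal_mul, ENNReal.toReal_mul, ENNReal.toReal_mul,
    ENNReal.toReal_ofReal (sq_nonneg M),
    ENNReal.toReal_ofReal (integral_nonneg fun s => (Real.exp_pos _).le),
    ENNReal.toReal_ofReal (integral_nonneg hXnn)]
  ring
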